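/- arXiv:1409.7852 — 7 statements merged into one kernel-verified Lean document; each statement's English description precedes it below -/
import Mathlib

section
/- For x, b ∈ ℝ^N, the following are equivalent: (i) A·x = b; (ii) there exist real numbers l_1,…,l_{N−1} and r_2,…,r_N satisfying l_1 = u(1)·x_1, l_k = u(k)·x_k + l_{k−1} for 2 ≤ k ≤ N−1, r_N = v(N)·x_N, r_k = v(k)·x_k + r_{k+1} for 2 ≤ k ≤ N−1, together with the N equations v(i)·l_{i−1} + a(i)·x_i + u(i)·r_{i+1} = b_i for 1 ≤ i ≤ N, where the conventions l_0 = 0 and r_{N+1} = 0 are used. -/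
private lemma key_mulVec (N : ℕ) (a u v x : ℕ → ℝ)
    (A : Matrix (Fin N) (Fin N) ℝ)
    (hA : ∀ i j : Fin N, A i j =
      if i = j then a i.val else u (min i.val j.val) * v (max i.val j.val))
    (i : Fin N) :
    A.mulVec (fun j => x j.val) i =
      v i.val * (∑ j ∈ Finset.range i.val, u j * x j)
      + a i.val * x i.val
      + u i.val * (∑ j ∈ Finset.Ico (i.val + 1) N, v j * x j) := by
  have h1 : A.mulVec (fun j => x j.val) i
      = ∑ j : Fin N, (if i.val = j.val then a i.val
          else u (min i.val j.val) * v (max i.val j.val)) * x j.val := by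
    simp only [Matrix.mulVec, dotProduct]
    refine Finset.sum_congr rfl fun j _ => ?_
    simp only [hA, Fin.ext_iff]
  rw [h1]
  rw [Fin.sum_univ_eq_sum_range (fun j => (if i.val = j then a i.val
      else u (min i.val j) * v (max i.val j)) * x j) N]
  have hi1 : i.val + 1 ≤ N := i.isLt
  rw [Finset.range_eq_Ico, ← Finset.sum_Ico_consecutive _ (Nat.zero_le (i.val + 1)) hi1,
    ← Finset.range_eq_Ico, Finset.sum_range_succ]
  have hleft : ∑ j ∈ Finset.range i.val, (if i.val = j then a i.val
      else u (min i.val j) * v (max i.val j)) * x j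
      = v i.val * ∑ j ∈ Finset.range i.val, u j * x j := by
    rw [Finset.mul_sum]
    refine Finset.sum_congr rfl fun j hj => ?_
    rw [Finset.mem_range] at hj
    rw [if_neg (by omega), min_eq_right (by omega), max_eq_left (by omega)]
    ring
  have hright : ∑ j ∈ Finset.Ico (i.val + 1) N, (if i.val = j then a i.val
      else u (min i.val j) * v (max i.val j)) * x j
      = u i.val * ∑ j ∈ Finset.Ico (i.val + 1) N, v j * x j := by
    rw [Finset.mul_sum]
    refine Finset.sum_congr rfl fun j hj => ?_
    rw [Finset.mem_Ico] at hj
    rw [if_neg (by omega), min_eq_left (by omega), max_eq_right (by omega)]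
    ring
  rw [hleft, hright, if_pos rfl]

/-- For the rank-1 semi-separable matrix `A` (indices written 0-based:
`A i i = a i`, `A i j = u (min i j) * v (max i j)` for `i ≠ j`), `A·x = b` iff there
exist auxiliary quantities `l` and `r` (`l k` is the 1-based `l_k`, and `r k` is the
1-based `r_{k+1}`) satisfying the stated recurrences together with the `N` equations
`v i * l_{i-1} + a i * x i + u i * r_{i+1} = b i`, with the conventions `l_0 = 0` and
`r_{N+1} = 0`. -/
theorem stmt_1 (N : ℕ) (hN : 2 ≤ N) (a u v x b : ℕ → ℝ)
    (A : Matrix (Fin N) (Fin N) ℝ)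
    (hA : ∀ i j : Fin N, A i j =
      if i = j then a i.val else u (min i.val j.val) * v (max i.val j.val)) :
    (A.mulVec (fun j => x j.val) = fun i : Fin N => b i.val) ↔
      ∃ l r : ℕ → ℝ,
        l 1 = u 0 * x 0 ∧
        (∀ k, 1 ≤ k → k ≤ N - 2 → l (k + 1) = u k * x k + l k) ∧
        r (N - 1) = v (N - 1) * x (N - 1) ∧
        (∀ k, 1 ≤ k → k ≤ N - 2 → r k = v k * x k + r (k + 1)) ∧
        (∀ i : Fin N,
          v i.val * (if i.val = 0 then 0 else l i.val)
          + a i.val * x i.val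
          + u i.val * (if i.val + 1 = N then 0 else r (i.val + 1)) = b i.val) := by
  set L : ℕ → ℝ := fun k => ∑ j ∈ Finset.range k, u j * x j with hL
  set R : ℕ → ℝ := fun k => ∑ j ∈ Finset.Ico k N, v j * x j with hR
  have hRstep : ∀ k, k < N → R k = v k * x k + R (k + 1) := by
    intro k hk
    simp only [hR]
    rw [Finset.sum_eq_sum_Ico_succ_bot hk]
  constructor
  · intro hAx
    refine ⟨L, R, ?_, ?_, ?_, ?_, ?_⟩
    · simp [hL]
    · intro k _ _
      simp only [hL]
      rw [Finset.sum_range_succ]; ring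
    · have h1 : N - 1 < N := by omega
      simp only [hR]
      have : N = (N - 1) + 1 := by omega
      rw [this, Finset.sum_Ico_eq_sum_range]
      simp
    · intro k hk1 hk2
      exact hRstep k (by omega)
    · intro i
      have hkey := key_mulVec N a u v x A hA i
      have hb : A.mulVec (fun j => x j.val) i = b i.val := by rw [hAx]
      rw [hb] at hkey
      rw [hkey]
      congr 1
      · congr 1
        split
        · next h => simp [hL, h]
        · rfl
      · congr 1
        split
        · next h => simp [hR, h]
        · rfl
  · rintro ⟨l, r, hl1, hlstep, hrN, hrstep, heq⟩
    have hlL : ∀ k, 1 ≤ k → k ≤ N - 1 → l k = L k := by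
      intro k hk1 hk2
      induction k with
      | zero => omega
      | succ n ih =>
        rcases Nat.eq_or_lt_of_le hk1 with h | h
        · have : n = 0 := by omega
          subst this
          simp [hL, hl1, Finset.sum_range_one]
        · have hn1 : 1 ≤ n := by omega
          have hn2 : n ≤ N - 2 := by omega
          rw [hlstep n hn1 hn2, ih hn1 (by omega)]
          simp only [hL]
          rw [Finset.sum_range_succ]; ring
    have hrR : ∀ m k, 1 ≤ k → k ≤ N - 1 → N - 1 - k ≤ m → r k = R k := by
      intro m
      induction m with
      | zero =>
        intro k hk1 hk2 hm
        have : k = N - 1 := by omega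
        subst this
        rw [hrN]
        simp only [hR]
        have hN' : N = (N - 1) + 1 := by omega
        rw [hN', Finset.sum_Ico_eq_sum_range]
        simp
      | succ m ih =>
        intro k hk1 hk2 hm
        rcases Nat.eq_or_lt_of_le hk2 with h | h
        · subst h
          rw [hrN]
          simp only [hR]
          have hN' : N = (N - 1) + 1 := by omega
          rw [hN', Finset.sum_Ico_eq_sum_range]
          simp
        · have hk3 : k ≤ N - 2 := by omega
          rw [hrstep k hk1 hk3, ih (k + 1) (by omega) (by omega) (by omega),
            hRstep k (by omega)]
    funext i
    rw [key_mulVec N a u v x A hA i, ← heq i]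
    congr 1
    · congr 1
      split
      · next h => simp [hL, h]
      · next h =>
          rw [hlL i.val (by omega) (by have := i.isLt; omega)]
    · congr 1
      split
      · next h => simp [hR, h]
      · next h =>
          rw [hrR (N - 1) (i.val + 1) (by omega) (by have := i.isLt; omega) (by omega)]
end

section
/- For x, b ∈ ℝ^N, the following are equivalent: (i) A·x = b; (ii) there exist vectors l_1,…,l_{N−1} ∈ ℝ^p and r_2,…,r_N ∈ ℝ^p satisfying l_1 = x_1·u(1), l_k = x_k·u(k) + l_{k−1} for 2 ≤ k ≤ N−1, r_N = x_N·v(N), r_k = x_k·v(k) + r_{k+1} for 2 ≤ k ≤ N−1, together with the N scalar equations ⟨v(i), l_{i−1}⟩ + a(i)·x_i + ⟨u(i), r_{i+1}⟩ = b_i for 1 ≤ i ≤ N, where the conventions l_0 = 0 ∈ ℝ^p and r_{N+1} = 0 ∈ ℝ^p are used and ⟨·,·⟩ denotes the Euclidean inner product on ℝ^p. -/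
/-- For the rank-`p` semi-separable matrix `A` (indices written 0-based:
`A i i = a i`, `A i j = ∑_{c} u (min i j) c * v (max i j) c` for `i ≠ j`), `A·x = b`
iff there exist vectors `l, r : ℕ → ℝ^p` (`l k` is the 1-based `l_k`, and `r k` is the
1-based `r_{k+1}`) satisfying the stated recurrences together with the `N` scalar
equations `⟨v i, l_{i-1}⟩ + a i * x i + ⟨u i, r_{i+1}⟩ = b i`, with the conventions
`l_0 = 0 ∈ ℝ^p`, `r_{N+1} = 0 ∈ ℝ^p`; the Euclidean inner product on `ℝ^p` is written
as a sum over components. -/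
theorem stmt_3 (N p : ℕ) (hN : 2 ≤ N) (hp : 1 ≤ p) (a x b : ℕ → ℝ)
    (u v : ℕ → Fin p → ℝ)
    (A : Matrix (Fin N) (Fin N) ℝ)
    (hA : ∀ i j : Fin N, A i j = if i = j then a i.val
      else ∑ c : Fin p, u (min i.val j.val) c * v (max i.val j.val) c) :
    (A.mulVec (fun j => x j.val) = fun i : Fin N => b i.val) ↔
      ∃ l r : ℕ → Fin p → ℝ,
        (∀ c : Fin p, l 1 c = x 0 * u 0 c) ∧
        (∀ k, 1 ≤ k → k ≤ N - 2 → ∀ c : Fin p, l (k + 1) c = x k * u k c + l k c) ∧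
        (∀ c : Fin p, r (N - 1) c = x (N - 1) * v (N - 1) c) ∧
        (∀ k, 1 ≤ k → k ≤ N - 2 → ∀ c : Fin p, r k c = x k * v k c + r (k + 1) c) ∧
        (∀ i : Fin N,
          (∑ c : Fin p, v i.val c * (if i.val = 0 then 0 else l i.val c))
          + a i.val * x i.val
          + (∑ c : Fin p, u i.val c * (if i.val + 1 = N then 0 else r (i.val + 1) c))
          = b i.val) := by
  set L : ℕ → Fin p → ℝ := fun k c => ∑ j ∈ Finset.range k, x j * u j c with hLdef
  set R : ℕ → Fin p → ℝ := fun k c => ∑ j ∈ Finset.Ico k N, x j * v j c with hRdef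
  have hL0 : ∀ c, L 0 c = 0 := by intro c; simp [hLdef]
  have hL1 : ∀ c, L 1 c = x 0 * u 0 c := by intro c; simp [hLdef]
  have hLs : ∀ k, ∀ c, L (k + 1) c = x k * u k c + L k c := by
    intro k c; simp only [hLdef]; rw [Finset.sum_range_succ]; ring
  have hRN0 : ∀ c, R N c = 0 := by intro c; simp [hRdef]
  have hRs : ∀ k, k < N → ∀ c, R k c = x k * v k c + R (k + 1) c := by
    intro k hk c; simp only [hRdef]; rw [Finset.sum_eq_sum_Ico_succ_bot hk]
  have hRbase : ∀ c, R (N - 1) c = x (N - 1) * v (N - 1) c := by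
    intro c
    rw [hRs (N - 1) (by omega) c, Nat.sub_add_cancel (by omega), hRN0 c, add_zero]
  have key : ∀ i : Fin N,
      A.mulVec (fun j => x j.val) i =
        (∑ c : Fin p, v i.val c * L i.val c) + a i.val * x i.val +
        (∑ c : Fin p, u i.val c * R (i.val + 1) c) := by
    intro i
    have hi : i.val < N := i.isLt
    have hmv : A.mulVec (fun j => x j.val) i
        = ∑ j ∈ Finset.range N, (if i.val = j then a i.val
            else ∑ c : Fin p, u (min i.val j) c * v (max i.val j) c) * x j := by
      rw [Matrix.mulVec, dotProduct]
      rw [← Fin.sum_univ_eq_sum_range (fun j => (if i.val = j then a i.val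
            else ∑ c : Fin p, u (min i.val j) c * v (max i.val j) c) * x j) N]
      refine Finset.sum_congr rfl fun j _ => ?_
      rw [hA]
      congr 1
      simp [Fin.ext_iff]
    rw [hmv, Finset.range_eq_Ico,
      ← Finset.sum_Ico_consecutive _ (Nat.zero_le i.val) (le_of_lt hi),
      Finset.sum_eq_sum_Ico_succ_bot hi]
    have e1 : (∑ c : Fin p, v i.val c * L i.val c)
        = ∑ j ∈ Finset.Ico 0 i.val, (∑ c : Fin p, u j c * v i.val c) * x j := by
      simp only [hLdef, Finset.range_eq_Ico]
      simp_rw [Finset.mul_sum]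
      rw [Finset.sum_comm]
      refine Finset.sum_congr rfl fun j _ => ?_
      rw [Finset.sum_mul]
      exact Finset.sum_congr rfl fun c _ => by ring
    have e2 : (∑ c : Fin p, u i.val c * R (i.val + 1) c)
        = ∑ j ∈ Finset.Ico (i.val + 1) N, (∑ c : Fin p, u i.val c * v j c) * x j := by
      simp only [hRdef]
      simp_rw [Finset.mul_sum]
      rw [Finset.sum_comm]
      refine Finset.sum_congr rfl fun j _ => ?_
      rw [Finset.sum_mul]
      exact Finset.sum_congr rfl fun c _ => by ring
    rw [e1, e2, if_pos rfl, ← add_assoc]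
    congr 1
    · congr 1
      refine Finset.sum_congr rfl fun j hj => ?_
      simp only [Finset.mem_Ico] at hj
      rw [if_neg (by omega), min_eq_right (by omega : j ≤ i.val),
        max_eq_left (by omega : j ≤ i.val)]
    · refine Finset.sum_congr rfl fun j hj => ?_
      simp only [Finset.mem_Ico] at hj
      rw [if_neg (by omega), min_eq_left (by omega : i.val ≤ j),
        max_eq_right (by omega : i.val ≤ j)]
  constructor
  · intro h
    refine ⟨L, R, hL1, fun k _ _ c => hLs k c, hRbase,
      fun k _ hk2 c => hRs k (by omega) c, ?_⟩
    intro i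
    have hmain := congrFun h i
    rw [key i] at hmain
    rw [← hmain]
    congr 1
    · congr 1
      refine Finset.sum_congr rfl fun c _ => ?_
      by_cases h0 : i.val = 0
      · rw [if_pos h0, h0, hL0 c, mul_zero]
      · rw [if_neg h0]
    · refine Finset.sum_congr rfl fun c _ => ?_
      by_cases h1 : i.val + 1 = N
      · rw [if_pos h1, h1, hRN0 c, mul_zero]
      · rw [if_neg h1]
  · rintro ⟨l, r, hl1, hls, hrN, hrs, heq⟩
    have hlL : ∀ k, 1 ≤ k → k ≤ N - 1 → ∀ c, l k c = L k c := by
      intro k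
      induction k with
      | zero => omega
      | succ n ih =>
        intro _ hk2 c
        rcases Nat.eq_zero_or_pos n with h0 | h0
        · subst h0; rw [hl1 c, hL1 c]
        · rw [hls n h0 (by omega) c, hLs n c, ih (by omega) (by omega) c]
    have hrbase : ∀ c, r (N - 1) c = R (N - 1) c := by
      intro c; rw [hrN c, hRbase c]
    have hrR : ∀ m k, 1 ≤ k → k ≤ N - 1 → N - 1 - k ≤ m → ∀ c, r k c = R k c := by
      intro m
      induction m with
      | zero =>
        intro k hk1 hk2 hm c
        have : k = N - 1 := by omega
        subst this; exact hrbase c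
      | succ m ih =>
        intro k hk1 hk2 hm c
        by_cases hk : k = N - 1
        · subst hk; exact hrbase c
        · rw [hrs k hk1 (by omega) c, hRs k (by omega) c,
            ih (k + 1) (by omega) (by omega) (by omega) c]
    funext i
    rw [key i, ← heq i]
    congr 1
    · congr 1
      refine Finset.sum_congr rfl fun c _ => ?_
      by_cases h0 : i.val = 0
      · rw [if_pos h0, h0, hL0 c, mul_zero]
      · rw [if_neg h0, hlL i.val (by omega) (by omega : i.val ≤ N - 1) c]
    · refine Finset.sum_congr rfl fun c _ => ?_
      by_cases h1 : i.val + 1 = N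
      · rw [if_pos h1, h1, hRN0 c, mul_zero]
      · rw [if_neg h1, hrR (N - 1) (i.val + 1) (by omega) (by omega) (by omega) c]
  done
end

section
/- The determinant of the extended matrix A_ex equals the determinant of A up to sign: |det A_ex| = |det A|. Here A_ex is the (3N−2)×(3N−2) real matrix acting on the concatenated variable vector (x_1,…,x_N, l_1,…,l_{N−1}, r_2,…,r_N) whose rows, in order, are the linear forms E_1,…,E_N, L_1,…,L_{N−1}, R_2,…,R_N given by E_i = v(i)·l_{i−1} + a(i)·x_i + u(i)·r_{i+1} (with l_0 and r_{N+1} read as 0), L_1 = l_1 − u(1)·x_1, L_k = l_k − u(k)·x_k − l_{k−1} for 2 ≤ k ≤ N−1, R_N = r_N − v(N)·x_N, and R_k = r_k − v(k)·x_k − r_{k+1} for 2 ≤ k ≤ N−1. -/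
open Matrix Finset

/-- evaluate a sum of a function supported (via an `if`) on a single `val`-value. -/
lemma sum_ite_val {n m : ℕ} (c : Fin n → ℝ) (cond : Fin n → Prop) [DecidablePred cond]
    (h : ∀ k, cond k ↔ k.val = m) :
    (∑ k : Fin n, if cond k then c k else 0) = if hm : m < n then c ⟨m, hm⟩ else 0 := by
  split
  · next hm =>
    have h1 : (∑ k : Fin n, if cond k then c k else 0) = if cond ⟨m, hm⟩ then c ⟨m, hm⟩ else 0 :=
      Finset.sum_eq_single_of_mem ⟨m, hm⟩ (Finset.mem_univ _) (fun b _ hb =>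
        if_neg (fun hc => hb (Fin.ext (by simpa using (h b).1 hc))))
    rw [h1, if_pos ((h _).2 rfl)]
  · next hm =>
    apply Finset.sum_eq_zero
    intro k _
    rw [if_neg]
    intro hc
    exact hm (((h k).1 hc) ▸ k.isLt)

lemma sum_ite_le {N : ℕ} (k : ℕ) (hk : k < N) (f : Fin N → ℝ) :
    (∑ j : Fin N, if j.val ≤ k then f j else 0)
      = f ⟨k, hk⟩ + ∑ j : Fin N, if j.val < k then f j else 0 := by
  have : ∀ j : Fin N, (if j.val ≤ k then f j else 0)
      = (if j.val = k then f j else 0) + (if j.val < k then f j else 0) := by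
    intro j; split_ifs <;> first | (exfalso; omega) | ring
  rw [Finset.sum_congr rfl (fun j _ => this j), Finset.sum_add_distrib,
    sum_ite_val f (fun j => j.val = k) (fun _ => Iff.rfl), dif_pos hk]

lemma sum_ite_ge {N : ℕ} (k : ℕ) (hk : k < N) (f : Fin N → ℝ) :
    (∑ j : Fin N, if k ≤ j.val then f j else 0)
      = f ⟨k, hk⟩ + ∑ j : Fin N, if k + 1 ≤ j.val then f j else 0 := by
  have : ∀ j : Fin N, (if k ≤ j.val then f j else 0)
      = (if j.val = k then f j else 0) + (if k + 1 ≤ j.val then f j else 0) := by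
    intro j; split_ifs <;> first | (exfalso; omega) | ring
  rw [Finset.sum_congr rfl (fun j _ => this j), Finset.sum_add_distrib,
    sum_ite_val f (fun j => j.val = k) (fun _ => Iff.rfl), dif_pos hk]

theorem test : True := trivial

noncomputable def Qaux (N : ℕ) (u v : ℕ → ℝ) : Matrix (Fin (N-1) ⊕ Fin (N-1)) (Fin N) ℝ :=
  Matrix.of (Sum.elim (fun k j => if j.val ≤ k.val then u j.val else 0)
                      (fun k j => if k.val + 1 ≤ j.val then v j.val else 0))

noncomputable def Paux (N : ℕ) (u v : ℕ → ℝ) :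
    Matrix (Fin N ⊕ (Fin (N-1) ⊕ Fin (N-1))) (Fin N ⊕ (Fin (N-1) ⊕ Fin (N-1))) ℝ :=
  Matrix.fromBlocks 1 0 (Qaux N u v) 1

noncomputable def Baux (N : ℕ) (u v : ℕ → ℝ) : Matrix (Fin N) (Fin (N-1) ⊕ Fin (N-1)) ℝ :=
  Matrix.of fun i => Sum.elim (fun k => if k.val + 1 = i.val then v i.val else 0)
                              (fun k => if k.val = i.val then u i.val else 0)

noncomputable def Laux (n : ℕ) : Matrix (Fin n) (Fin n) ℝ :=
  Matrix.of fun k m => (if m.val = k.val then (1:ℝ) else 0) + (if m.val + 1 = k.val then -1 else 0)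

noncomputable def Raux (n : ℕ) : Matrix (Fin n) (Fin n) ℝ :=
  Matrix.of fun k m => (if m.val = k.val then (1:ℝ) else 0) + (if m.val = k.val + 1 then -1 else 0)



/-- `|det A_ex| = |det A|`. The extended matrix `A_ex` acts on the
concatenated variable vector `(x_1,…,x_N, l_1,…,l_{N-1}, r_2,…,r_N)`, encoded by the
index type `Fin N ⊕ (Fin (N-1) ⊕ Fin (N-1))`: `Sum.inl i` holds `x_{i+1}`,
`Sum.inr (Sum.inl k)` holds `l_{k+1}`, and `Sum.inr (Sum.inr k)` holds `r_{k+2}`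
(1-based names).  Its rows are the linear forms `E_1,…,E_N, L_1,…,L_{N-1}, R_2,…,R_N`,
specified through the action of `A_ex` on every vector `y`. -/
theorem stmt_4 (N : ℕ) (hN : 2 ≤ N) (a u v : ℕ → ℝ)
    (A : Matrix (Fin N) (Fin N) ℝ)
    (hA : ∀ i j : Fin N, A i j =
      if i = j then a i.val else u (min i.val j.val) * v (max i.val j.val))
    (Aex : Matrix (Fin N ⊕ (Fin (N - 1) ⊕ Fin (N - 1)))
                  (Fin N ⊕ (Fin (N - 1) ⊕ Fin (N - 1))) ℝ)
    (hEx : ∀ y : (Fin N ⊕ (Fin (N - 1) ⊕ Fin (N - 1))) → ℝ,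
      -- rows E_i :  v(i)·l_{i-1} + a(i)·x_i + u(i)·r_{i+1}  (l_0, r_{N+1} read as 0)
      (∀ i : Fin N, Aex.mulVec y (Sum.inl i) =
        v i.val * (if h : 1 ≤ i.val then
            y (Sum.inr (Sum.inl ⟨i.val - 1, by have := i.isLt; omega⟩)) else 0)
        + a i.val * y (Sum.inl i)
        + u i.val * (if h : i.val + 2 ≤ N then
            y (Sum.inr (Sum.inr ⟨i.val, by omega⟩)) else 0))
      ∧
      -- rows L_k :  l_k - u(k)·x_k - l_{k-1}  (l_0 read as 0)
      (∀ k : Fin (N - 1), Aex.mulVec y (Sum.inr (Sum.inl k)) =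
        y (Sum.inr (Sum.inl k))
        - u k.val * y (Sum.inl ⟨k.val, by have := k.isLt; omega⟩)
        - (if h : 1 ≤ k.val then
            y (Sum.inr (Sum.inl ⟨k.val - 1, by have := k.isLt; omega⟩)) else 0))
      ∧
      -- rows R_{k+2} :  r_{k+2} - v(k+2)·x_{k+2} - r_{k+3}  (r_{N+1} read as 0)
      (∀ k : Fin (N - 1), Aex.mulVec y (Sum.inr (Sum.inr k)) =
        y (Sum.inr (Sum.inr k))
        - v (k.val + 1) * y (Sum.inl ⟨k.val + 1, by have := k.isLt; omega⟩)
        - (if h : k.val + 1 < N - 1 then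
            y (Sum.inr (Sum.inr ⟨k.val + 1, h⟩)) else 0))) :
    |Aex.det| = |A.det| := by
  set P := Paux N u v with hPdef
  set S : Matrix (Fin (N-1) ⊕ Fin (N-1)) (Fin (N-1) ⊕ Fin (N-1)) ℝ :=
    Matrix.fromBlocks (Laux (N-1)) 0 0 (Raux (N-1)) with hSdef
  set M : Matrix (Fin N ⊕ (Fin (N-1) ⊕ Fin (N-1))) (Fin N ⊕ (Fin (N-1) ⊕ Fin (N-1))) ℝ :=
    Matrix.fromBlocks A (Baux N u v) 0 S with hMdef
  -- mulVec formulas for P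
  have hPx : ∀ (y : (Fin N ⊕ (Fin (N-1) ⊕ Fin (N-1))) → ℝ) (j : Fin N),
      P.mulVec y (Sum.inl j) = y (Sum.inl j) := by
    intro y j
    simp [hPdef, Paux, Matrix.mulVec, dotProduct, Fintype.sum_sum_type,
      Matrix.one_apply, ite_mul, zero_mul]
  have hPl : ∀ (y : (Fin N ⊕ (Fin (N-1) ⊕ Fin (N-1))) → ℝ) (k : Fin (N-1)),
      P.mulVec y (Sum.inr (Sum.inl k)) =
        (∑ j : Fin N, if j.val ≤ k.val then u j.val * y (Sum.inl j) else 0)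
          + y (Sum.inr (Sum.inl k)) := by
    intro y k
    simp [hPdef, Paux, Qaux, Matrix.mulVec, dotProduct, Fintype.sum_sum_type,
      Matrix.one_apply, ite_mul, zero_mul]
  have hPr : ∀ (y : (Fin N ⊕ (Fin (N-1) ⊕ Fin (N-1))) → ℝ) (k : Fin (N-1)),
      P.mulVec y (Sum.inr (Sum.inr k)) =
        (∑ j : Fin N, if k.val + 1 ≤ j.val then v j.val * y (Sum.inl j) else 0)
          + y (Sum.inr (Sum.inr k)) := by
    intro y k
    simp [hPdef, Paux, Qaux, Matrix.mulVec, dotProduct, Fintype.sum_sum_type,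
      Matrix.one_apply, ite_mul, zero_mul]
  -- the key computation
  have key : ∀ y, Aex.mulVec (P.mulVec y) = M.mulVec y := by
    intro y
    obtain ⟨hE, hL, hR⟩ := hEx (P.mulVec y)
    funext e
    obtain i | k | k := e
    · rw [hE i]
      simp only [hPx, hPl, hPr]
      -- RHS expansion
      have hRHS : M.mulVec y (Sum.inl i) =
          (∑ j : Fin N, A i j * y (Sum.inl j))
          + (∑ k : Fin (N-1), if k.val + 1 = i.val then v i.val * y (Sum.inr (Sum.inl k)) else 0)
          + (∑ k : Fin (N-1), if k.val = i.val then u i.val * y (Sum.inr (Sum.inr k)) else 0) := by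
        simp [hMdef, Baux, Matrix.mulVec, dotProduct, Fintype.sum_sum_type,
          ite_mul, zero_mul, add_assoc]
      rw [hRHS]
      have hAsum : (∑ j : Fin N, A i j * y (Sum.inl j))
          = v i.val * (∑ j : Fin N, if j.val < i.val then u j.val * y (Sum.inl j) else 0)
          + a i.val * y (Sum.inl i)
          + u i.val * (∑ j : Fin N, if i.val < j.val then v j.val * y (Sum.inl j) else 0) := by
        have h1 : ∀ j : Fin N, A i j * y (Sum.inl j) =
            v i.val * (if j.val < i.val then u j.val * y (Sum.inl j) else 0)
            + (if j.val = i.val then a i.val * y (Sum.inl j) else 0)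
            + u i.val * (if i.val < j.val then v j.val * y (Sum.inl j) else 0) := by
          intro j
          rw [hA i j]
          rcases lt_trichotomy j.val i.val with h | h | h
          · rw [if_neg (fun he => by rw [he] at h; exact lt_irrefl _ h), if_pos h, if_neg (by omega),
              if_neg (by omega), min_comm, Nat.min_eq_left h.le, Nat.max_eq_left h.le]
            ring
          · rw [if_pos (Fin.ext h.symm), if_neg (by omega), if_pos h, if_neg (by omega)]
            ring
          · rw [if_neg (fun he => by rw [he] at h; exact lt_irrefl _ h), if_neg (by omega), if_neg (by omega),
              if_pos h, Nat.min_eq_left h.le, max_comm, Nat.max_eq_left h.le]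
            ring
        rw [Finset.sum_congr rfl (fun j _ => h1 j), Finset.sum_add_distrib,
          Finset.sum_add_distrib, ← Finset.mul_sum, ← Finset.mul_sum,
          sum_ite_val (fun j => a i.val * y (Sum.inl j)) (fun j => j.val = i.val)
            (fun _ => Iff.rfl), dif_pos i.isLt]
      rw [hAsum]
      have hBl : (∑ k : Fin (N-1), if k.val + 1 = i.val then v i.val * y (Sum.inr (Sum.inl k)) else 0)
          = if h : 1 ≤ i.val then
              v i.val * y (Sum.inr (Sum.inl ⟨i.val - 1, by have := i.isLt; omega⟩)) else 0 := by
        by_cases hi : 1 ≤ i.val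
        · rw [dif_pos hi, sum_ite_val (m := i.val - 1) (fun k => v i.val * y (Sum.inr (Sum.inl k)))
            (fun k => k.val + 1 = i.val) (fun k => by omega),
            dif_pos (show i.val - 1 < N - 1 by have := i.isLt; omega)]
        · rw [dif_neg hi]
          exact Finset.sum_eq_zero fun k _ => if_neg (by omega)
      have hBr : (∑ k : Fin (N-1), if k.val = i.val then u i.val * y (Sum.inr (Sum.inr k)) else 0)
          = if h : i.val + 2 ≤ N then
              u i.val * y (Sum.inr (Sum.inr ⟨i.val, by omega⟩)) else 0 := by
        by_cases hi : i.val + 2 ≤ N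
        · rw [dif_pos hi, sum_ite_val (fun k => u i.val * y (Sum.inr (Sum.inr k)))
            (fun k => k.val = i.val) (fun k => Iff.rfl),
            dif_pos (show i.val < N - 1 by omega)]
        · rw [dif_neg hi]
          exact Finset.sum_eq_zero fun k _ => if_neg (by have := k.isLt; omega)
      rw [hBl, hBr]
      by_cases hi1 : 1 ≤ i.val
      · rw [dif_pos hi1, dif_pos hi1]
        have e1 : (∑ j : Fin N, if j.val ≤ i.val - 1 then u j.val * y (Sum.inl j) else 0)
            = ∑ j : Fin N, if j.val < i.val then u j.val * y (Sum.inl j) else 0 :=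
          Finset.sum_congr rfl fun j _ => by
            split_ifs <;> first | rfl | (exfalso; omega)
        by_cases hi2 : i.val + 2 ≤ N
        · rw [dif_pos hi2, dif_pos hi2, e1]
          have e2 : (∑ j : Fin N, if i.val + 1 ≤ j.val then v j.val * y (Sum.inl j) else 0)
              = ∑ j : Fin N, if i.val < j.val then v j.val * y (Sum.inl j) else 0 :=
            Finset.sum_congr rfl fun j _ => by
              split_ifs <;> first | rfl | (exfalso; omega)
          rw [e2]; ring
        · rw [dif_neg hi2, dif_neg hi2, e1]
          have e2 : (∑ j : Fin N, if i.val < j.val then v j.val * y (Sum.inl j) else 0) = 0 :=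
            Finset.sum_eq_zero fun j _ => if_neg (by have := j.isLt; have := i.isLt; omega)
          rw [e2]; ring
      · rw [dif_neg hi1, dif_neg hi1]
        have e1 : (∑ j : Fin N, if j.val < i.val then u j.val * y (Sum.inl j) else 0) = 0 :=
          Finset.sum_eq_zero fun j _ => if_neg (by omega)
        rw [e1]
        by_cases hi2 : i.val + 2 ≤ N
        · rw [dif_pos hi2, dif_pos hi2]
          have e2 : (∑ j : Fin N, if i.val + 1 ≤ j.val then v j.val * y (Sum.inl j) else 0)
              = ∑ j : Fin N, if i.val < j.val then v j.val * y (Sum.inl j) else 0 :=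
            Finset.sum_congr rfl fun j _ => by
              split_ifs <;> first | rfl | (exfalso; omega)
          rw [e2]; ring
        · rw [dif_neg hi2, dif_neg hi2]
          have e2 : (∑ j : Fin N, if i.val < j.val then v j.val * y (Sum.inl j) else 0) = 0 :=
            Finset.sum_eq_zero fun j _ => if_neg (by have := j.isLt; have := i.isLt; omega)
          rw [e2]; ring
    · rw [hL k]
      simp only [hPx, hPl]
      have hRHS : M.mulVec y (Sum.inr (Sum.inl k)) =
          (∑ m : Fin (N-1), if m.val = k.val then y (Sum.inr (Sum.inl m)) else 0)
          + (∑ m : Fin (N-1), if m.val + 1 = k.val then -y (Sum.inr (Sum.inl m)) else 0) := by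
        simp [hMdef, hSdef, Laux, Matrix.mulVec, dotProduct, Fintype.sum_sum_type,
          ite_mul, zero_mul, add_mul, one_mul, neg_mul, Finset.sum_add_distrib]
      rw [hRHS, sum_ite_val (fun m => y (Sum.inr (Sum.inl m))) (fun m => m.val = k.val)
        (fun _ => Iff.rfl), dif_pos k.isLt]
      have hkN : k.val < N := by have := k.isLt; omega
      rw [sum_ite_le k.val hkN (fun j => u j.val * y (Sum.inl j))]
      by_cases hk : 1 ≤ k.val
      · rw [dif_pos hk,
          sum_ite_val (m := k.val - 1) (fun m => -y (Sum.inr (Sum.inl m))) (fun m => m.val + 1 = k.val)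
            (fun m => by omega), dif_pos (show k.val - 1 < N - 1 by have := k.isLt; omega)]
        have e1 : (∑ j : Fin N, if j.val ≤ k.val - 1 then u j.val * y (Sum.inl j) else 0)
            = ∑ j : Fin N, if j.val < k.val then u j.val * y (Sum.inl j) else 0 :=
          Finset.sum_congr rfl fun j _ => by
            split_ifs <;> first | rfl | (exfalso; omega)
        rw [e1, Fin.eta]
        ring
      · rw [dif_neg hk]
        have e0 : (∑ m : Fin (N-1), if m.val + 1 = k.val then -y (Sum.inr (Sum.inl m)) else 0) = 0 :=
          Finset.sum_eq_zero fun m _ => if_neg (by omega)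
        have e1 : (∑ j : Fin N, if j.val < k.val then u j.val * y (Sum.inl j) else 0) = 0 :=
          Finset.sum_eq_zero fun j _ => if_neg (by omega)
        rw [e0, e1, Fin.eta]
        ring
    · rw [hR k]
      simp only [hPx, hPr]
      have hRHS : M.mulVec y (Sum.inr (Sum.inr k)) =
          (∑ m : Fin (N-1), if m.val = k.val then y (Sum.inr (Sum.inr m)) else 0)
          + (∑ m : Fin (N-1), if m.val = k.val + 1 then -y (Sum.inr (Sum.inr m)) else 0) := by
        simp [hMdef, hSdef, Raux, Matrix.mulVec, dotProduct, Fintype.sum_sum_type,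
          ite_mul, zero_mul, add_mul, one_mul, neg_mul, Finset.sum_add_distrib]
      rw [hRHS, sum_ite_val (fun m => y (Sum.inr (Sum.inr m))) (fun m => m.val = k.val)
        (fun _ => Iff.rfl), dif_pos k.isLt,
        sum_ite_val (fun m => -y (Sum.inr (Sum.inr m))) (fun m => m.val = k.val + 1)
          (fun _ => Iff.rfl)]
      have hkN : k.val + 1 < N := by have := k.isLt; omega
      rw [sum_ite_ge (k.val + 1) hkN (fun j => v j.val * y (Sum.inl j))]
      by_cases hk : k.val + 1 < N - 1
      · rw [dif_pos hk, dif_pos hk]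
        have e1 : (∑ j : Fin N, if k.val + 1 + 1 ≤ j.val then v j.val * y (Sum.inl j) else 0)
            = ∑ j : Fin N, if k.val + 2 ≤ j.val then v j.val * y (Sum.inl j) else 0 :=
          Finset.sum_congr rfl fun j _ => by
            split_ifs <;> first | rfl | (exfalso; omega)
        rw [e1, Fin.eta]
        ring
      · rw [dif_neg hk, dif_neg hk]
        have e1 : (∑ j : Fin N, if k.val + 1 + 1 ≤ j.val then v j.val * y (Sum.inl j) else 0) = 0 :=
          Finset.sum_eq_zero fun j _ => if_neg (by have := j.isLt; have := k.isLt; omega)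
        rw [e1, Fin.eta]
        ring
  -- conclude Aex * P = M
  have hMP : Aex * P = M := by
    ext e f
    have h := congrFun (key (Pi.single f 1)) e
    rw [Matrix.mulVec_mulVec] at h
    simpa using h
  -- determinants
  have hdP : P.det = 1 := by
    rw [hPdef, Paux, Matrix.det_fromBlocks_zero₁₂, Matrix.det_one, Matrix.det_one, mul_one]
  have hdL : (Laux (N-1)).det = 1 := by
    rw [Matrix.det_of_lowerTriangular (Laux (N-1))]
    · apply Finset.prod_eq_one
      intro i _
      simp [Laux]
    · intro i j hij
      have h : i < j := by simpa using hij
      have h' : i.val < j.val := h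
      simp only [Laux, Matrix.of_apply]
      rw [if_neg (by omega), if_neg (by omega), add_zero]
  have hdR : (Raux (N-1)).det = 1 := by
    rw [Matrix.det_of_upperTriangular]
    · apply Finset.prod_eq_one
      intro i _
      simp [Raux]
    · intro i j hij
      have h' : j.val < i.val := hij
      simp only [Raux, Matrix.of_apply]
      rw [if_neg (by omega), if_neg (by omega), add_zero]
  have hdS : S.det = 1 := by
    rw [hSdef, Matrix.det_fromBlocks_zero₂₁, hdL, hdR, mul_one]
  have hdM : M.det = A.det := by
    rw [hMdef, Matrix.det_fromBlocks_zero₂₁, hdS, mul_one]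
  have hfin : Aex.det = A.det := by
    have h := congrArg Matrix.det hMP
    rwa [Matrix.det_mul, hdP, mul_one, hdM] at h
  rw [hfin]
end

section
/- Let x, b ∈ ℝ^N. Define l_1 = 0 and l_{k+1} = (x_k + l_k)·exp(−β·(t_{k+1} − t_k)) for 1 ≤ k ≤ N−1, and define r_N = x_N and r_k = x_k + exp(−β·(t_{k+1} − t_k))·r_{k+1} for 1 ≤ k ≤ N−1. Then A·x = b if and only if for every k ∈ {1,…,N}: l_k + x_k + exp(−β·(t_{k+1} − t_k))·r_{k+1} = b_k, where the last term is read as 0 when k = N. -/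
/-- 0-based indexing as in STATEMENT 8: with `A i j = exp(-β |t_i - t_j|)`
and `l`, `r` defined by the recurrences `l 0 = 0`,
`l (k+1) = (x k + l k)·exp(-β(t (k+1) - t k))`, `r (N-1) = x (N-1)`,
`r k = x k + exp(-β(t (k+1) - t k))·r (k+1)`, one has `A·x = b` iff for every `k < N`:
`l k + x k + exp(-β(t (k+1) - t k))·r (k+1) = b k`, the last term being read as `0`
for the last row. -/
theorem stmt_9 (N : ℕ) (hN : 2 ≤ N) (t : ℕ → ℝ)
    (ht : ∀ i j, i < j → j < N → t i < t j)
    (β : ℝ) (x b : ℕ → ℝ)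
    (A : Matrix (Fin N) (Fin N) ℝ)
    (hA : ∀ i j : Fin N, A i j = Real.exp (-β * |t i.val - t j.val|))
    (l r : ℕ → ℝ)
    (hl0 : l 0 = 0)
    (hl : ∀ k, k + 1 < N → l (k + 1) = (x k + l k) * Real.exp (-β * (t (k + 1) - t k)))
    (hrN : r (N - 1) = x (N - 1))
    (hr : ∀ k, k + 1 < N → r k = x k + Real.exp (-β * (t (k + 1) - t k)) * r (k + 1)) :
    (A.mulVec (fun j => x j.val) = fun i : Fin N => b i.val) ↔
      ∀ k : Fin N,
        l k.val + x k.val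
          + (if k.val + 1 < N then
              Real.exp (-β * (t (k.val + 1) - t k.val)) * r (k.val + 1) else 0)
        = b k.val := by
  have hlsum : ∀ k, k < N → l k = ∑ j ∈ Finset.range k, x j * Real.exp (-β * (t k - t j)) := by
    intro k
    induction k with
    | zero => intro _; simpa using hl0
    | succ k ih =>
      intro hk
      have hk' : k < N := Nat.lt_of_succ_lt hk
      rw [hl k hk, ih hk', Finset.sum_range_succ, add_mul, Finset.sum_mul, add_comm]
      congr 1
      apply Finset.sum_congr rfl
      intro j hj
      rw [mul_assoc, ← Real.exp_add]
      congr 2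
      ring
  have hrsum : ∀ d k, k + d + 1 = N →
      r k = ∑ j ∈ Finset.Ico k N, x j * Real.exp (-β * (t j - t k)) := by
    intro d
    induction d with
    | zero =>
      intro k hk
      have hk1 : k = N - 1 := by omega
      have hN1 : N = k + 1 := by omega
      subst hk1
      rw [hrN, hN1]
      simp
    | succ d ih =>
      intro k hk
      have h1 : k + 1 < N := by omega
      have h0 : k < N := by omega
      rw [hr k h1, ih (k + 1) (by omega),
        Finset.sum_eq_sum_Ico_succ_bot h0, Finset.mul_sum]
      congr 1
      · simp
      · apply Finset.sum_congr rfl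
        intro j hj
        rw [mul_comm (Real.exp _), mul_assoc, ← Real.exp_add]
        congr 2
        ring
  have key : ∀ k : Fin N, A.mulVec (fun j => x j.val) k =
      l k.val + x k.val
        + (if k.val + 1 < N then
            Real.exp (-β * (t (k.val + 1) - t k.val)) * r (k.val + 1) else 0) := by
    intro k
    have hrk : x k.val + (if k.val + 1 < N then
        Real.exp (-β * (t (k.val + 1) - t k.val)) * r (k.val + 1) else 0) = r k.val := by
      by_cases h : k.val + 1 < N
      · simp [h, hr k.val h]
      · have hk1 : k.val = N - 1 := by omega
        rw [if_neg h, add_zero, hk1, hrN]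
    rw [add_assoc, hrk]
    have hmv : A.mulVec (fun j => x j.val) k
        = ∑ j ∈ Finset.range N, Real.exp (-β * |t k.val - t j|) * x j := by
      rw [Matrix.mulVec, dotProduct]
      rw [← Fin.sum_univ_eq_sum_range (fun j => Real.exp (-β * |t k.val - t j|) * x j) N]
      apply Finset.sum_congr rfl
      intro j _
      rw [hA]
    rw [hmv, Finset.range_eq_Ico,
      ← Finset.sum_Ico_consecutive _ (Nat.zero_le k.val) (le_of_lt k.isLt),
      ← Finset.range_eq_Ico]
    have h1 : ∑ j ∈ Finset.range k.val, Real.exp (-β * |t k.val - t j|) * x j = l k.val := by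
      rw [hlsum k.val k.isLt]
      apply Finset.sum_congr rfl
      intro j hj
      rw [Finset.mem_range] at hj
      rw [abs_of_nonneg (by linarith [ht j k.val hj k.isLt]), mul_comm]
    have h2 : ∑ j ∈ Finset.Ico k.val N, Real.exp (-β * |t k.val - t j|) * x j = r k.val := by
      rw [hrsum (N - 1 - k.val) k.val (by omega)]
      apply Finset.sum_congr rfl
      intro j hj
      rw [Finset.mem_Ico] at hj
      have htj : t k.val ≤ t j := by
        rcases eq_or_lt_of_le hj.1 with h | h
        · rw [h]
        · exact le_of_lt (ht k.val j h hj.2)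
      rw [abs_sub_comm, abs_of_nonneg (by linarith), mul_comm]
    rw [h1, h2]
  rw [funext_iff]
  apply forall_congr'
  intro k
  rw [key k]
end

section
/- Let x ∈ ℝ^N. Let α = (α_1,…,α_p) ∈ ℝ^p, and for 1 ≤ k ≤ N−1 let γ_k ∈ ℝ^p have components γ_k^{(l)} = exp(−β_l·(t_{k+1} − t_k)), and let D^{(k,k+1)} be the p×p diagonal matrix with diagonal γ_k. Define r_N = x_N·α and r_k = x_k·α + D^{(k,k+1)}·r_{k+1} for 1 ≤ k ≤ N−1; define l_1 = 0 ∈ ℝ^p and l_k = x_{k−1}·γ_{k−1} + D^{(k−1,k)}·l_{k−1} for 2 ≤ k ≤ N. Then for every k ∈ {1,…,N} and every l ∈ {1,…,p}: the l-th component of l_k equals Σ_{j=1}^{k−1} exp(−β_l·(t_k − t_j))·x_j, and the l-th component of r_k equals α_l·Σ_{j=k}^{N} exp(−β_l·(t_j − t_k))·x_j. -/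
/-- STATEMENT 10 (0-based indexing: the 1-based `l_k, r_k, x_k, t_k` are `l (k-1)`,
`r (k-1)`, `x (k-1)`, `t (k-1)` here; `γ_k` has components `exp(-β_c (t (k+1) - t k))`
and `D^{(k,k+1)}·w` acts componentwise as `γ_k^{(c)} · w^{(c)}`, written out
explicitly): with `r (N-1) = x (N-1)•α`, `r k = x k•α + D·r (k+1)` for `k + 1 < N`,
`l 0 = 0`, and `l (k+1) = x k•γ_k + D·l k` for `k + 1 < N`, one has for every `k < N`
and every component `c`: `l k c = ∑_{j<k} exp(-β_c(t k - t j))·x j` and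
`r k c = α_c · ∑_{k ≤ j < N} exp(-β_c(t j - t k))·x j`. -/
theorem stmt_10 (N p : ℕ) (hN : 2 ≤ N) (hp : 1 ≤ p) (t : ℕ → ℝ)
    (ht : ∀ i j, i < j → j < N → t i < t j)
    (α β : Fin p → ℝ) (d : ℝ) (x : ℕ → ℝ)
    (l r : ℕ → Fin p → ℝ)
    (hrN : ∀ c : Fin p, r (N - 1) c = x (N - 1) * α c)
    (hr : ∀ k, k + 1 < N → ∀ c : Fin p,
      r k c = x k * α c + Real.exp (-β c * (t (k + 1) - t k)) * r (k + 1) c)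
    (hl0 : ∀ c : Fin p, l 0 c = 0)
    (hl : ∀ k, k + 1 < N → ∀ c : Fin p,
      l (k + 1) c = x k * Real.exp (-β c * (t (k + 1) - t k))
        + Real.exp (-β c * (t (k + 1) - t k)) * l k c) :
    ∀ k, k < N → ∀ c : Fin p,
      (l k c = ∑ j ∈ Finset.range k, Real.exp (-β c * (t k - t j)) * x j)
      ∧ (r k c = α c * ∑ j ∈ Finset.Ico k N, Real.exp (-β c * (t j - t k)) * x j) := by
  have hL : ∀ k, k < N → ∀ c : Fin p,
      l k c = ∑ j ∈ Finset.range k, Real.exp (-β c * (t k - t j)) * x j := by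
    intro k
    induction k with
    | zero => intro _ c; simp [hl0]
    | succ k ih =>
      intro hk c
      have hE : ∀ j, Real.exp (-β c * (t (k+1) - t k)) * (Real.exp (-β c * (t k - t j)) * x j)
          = Real.exp (-β c * (t (k+1) - t j)) * x j := by
        intro j
        rw [← mul_assoc, ← Real.exp_add]
        ring_nf
      rw [hl k hk c, ih (by omega) c, Finset.sum_range_succ, Finset.mul_sum]
      simp_rw [hE]
      ring
  have hR : ∀ m k, k + m = N - 1 → ∀ c : Fin p,
      r k c = α c * ∑ j ∈ Finset.Ico k N, Real.exp (-β c * (t j - t k)) * x j := by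
    intro m
    induction m with
    | zero =>
      intro k hk c
      have hk' : k = N - 1 := by omega
      have hIco : Finset.Ico k N = {k} := by
        rw [show N = k + 1 from by omega]
        exact Nat.Ico_succ_singleton k
      rw [hIco, Finset.sum_singleton, sub_self, mul_zero, Real.exp_zero, one_mul, hk',
        hrN c]
      ring
    | succ m ih =>
      intro k hk c
      have hk1 : k + 1 < N := by omega
      have hE : ∀ j, Real.exp (-β c * (t (k+1) - t k)) * (Real.exp (-β c * (t j - t (k+1))) * x j)
          = Real.exp (-β c * (t j - t k)) * x j := by
        intro j
        rw [← mul_assoc, ← Real.exp_add]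
        ring_nf
      rw [hr k hk1 c, ih (k+1) (by omega) c]
      have key : Real.exp (-β c * (t (k+1) - t k)) *
            (α c * ∑ j ∈ Finset.Ico (k+1) N, Real.exp (-β c * (t j - t (k+1))) * x j)
          = α c * ∑ j ∈ Finset.Ico (k+1) N, Real.exp (-β c * (t j - t k)) * x j := by
        rw [mul_left_comm]
        congr 1
        rw [Finset.mul_sum]
        exact Finset.sum_congr rfl fun j _ => hE j
      rw [key]
      conv_rhs => rw [Finset.sum_eq_sum_Ico_succ_bot (show k < N by omega), sub_self, mul_zero,
        Real.exp_zero, one_mul]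
      ring
  intro k hk c
  exact ⟨hL k hk c, hR (N - 1 - k) k (by omega) c⟩
end

section
/- Let x, b ∈ ℝ^N. Let α = (α_1,…,α_p) ∈ ℝ^p, and for 1 ≤ k ≤ N−1 let γ_k ∈ ℝ^p have components γ_k^{(l)} = exp(−β_l·(t_{k+1} − t_k)), and let D^{(k,k+1)} be the p×p diagonal matrix with diagonal γ_k. Define r_N = x_N·α and r_k = x_k·α + D^{(k,k+1)}·r_{k+1} for 1 ≤ k ≤ N−1; define l_1 = 0 ∈ ℝ^p and l_k = x_{k−1}·γ_{k−1} + D^{(k−1,k)}·l_{k−1} for 2 ≤ k ≤ N. Then A·x = b if and only if for every k ∈ {1,…,N}: ⟨α, l_k⟩ + d·x_k + ⟨γ_k, r_{k+1}⟩ = b_k, where the last inner product is read as 0 when k = N and ⟨·,·⟩ denotes the Euclidean inner product on ℝ^p. -/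
/-- 0-based indexing as in STATEMENT 10: with
`A i i = d`, `A i j = ∑_c α_c exp(-β_c |t_i - t_j|)` for `i ≠ j`, and `l`, `r`
defined by the stated recurrences, one has `A·x = b` iff for every `k < N`:
`⟨α, l k⟩ + d·x k + ⟨γ_k, r (k+1)⟩ = b k`, the last inner product being read as `0`
for the last row; inner products on `ℝ^p` are written as sums over components. -/
theorem stmt_11 (N p : ℕ) (hN : 2 ≤ N) (hp : 1 ≤ p) (t : ℕ → ℝ)
    (ht : ∀ i j, i < j → j < N → t i < t j)
    (α β : Fin p → ℝ) (d : ℝ) (x b : ℕ → ℝ)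
    (A : Matrix (Fin N) (Fin N) ℝ)
    (hA : ∀ i j : Fin N, A i j = if i = j then d
      else ∑ c : Fin p, α c * Real.exp (-β c * |t i.val - t j.val|))
    (l r : ℕ → Fin p → ℝ)
    (hrN : ∀ c : Fin p, r (N - 1) c = x (N - 1) * α c)
    (hr : ∀ k, k + 1 < N → ∀ c : Fin p,
      r k c = x k * α c + Real.exp (-β c * (t (k + 1) - t k)) * r (k + 1) c)
    (hl0 : ∀ c : Fin p, l 0 c = 0)
    (hl : ∀ k, k + 1 < N → ∀ c : Fin p,
      l (k + 1) c = x k * Real.exp (-β c * (t (k + 1) - t k))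
        + Real.exp (-β c * (t (k + 1) - t k)) * l k c) :
    (A.mulVec (fun j => x j.val) = fun i : Fin N => b i.val) ↔
      ∀ k : Fin N,
        (∑ c : Fin p, α c * l k.val c) + d * x k.val
          + (if k.val + 1 < N then
              ∑ c : Fin p, Real.exp (-β c * (t (k.val + 1) - t k.val)) * r (k.val + 1) c
            else 0)
        = b k.val := by
  -- closed form for l
  have hlclosed : ∀ k, k < N → ∀ c,
      l k c = ∑ j ∈ Finset.range k, x j * Real.exp (-β c * (t k - t j)) := by
    intro k
    induction k with
    | zero => intro _ c; simpa using hl0 c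
    | succ k ih =>
      intro hk c
      rw [hl k hk c, ih (by omega) c, Finset.mul_sum, Finset.sum_range_succ, add_comm]
      congr 1
      apply Finset.sum_congr rfl
      intro j _
      rw [show -β c * (t (k+1) - t j) = (-β c * (t (k+1) - t k)) + (-β c * (t k - t j)) by
        ring, Real.exp_add]
      ring
  -- closed form for r
  have hrclosed : ∀ m k, k + m + 1 = N → ∀ c,
      r k c = ∑ j ∈ Finset.Ico k N, x j * α c * Real.exp (-β c * (t j - t k)) := by
    intro m
    induction m with
    | zero =>
      intro k hk c
      have hk' : k = N - 1 := by omega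
      subst hk'
      rw [Finset.sum_eq_sum_Ico_succ_bot (show N - 1 < N by omega),
        Finset.Ico_eq_empty (by omega), Finset.sum_empty, hrN c]
      simp
    | succ m ih =>
      intro k hk c
      have h1 : k + 1 < N := by omega
      rw [hr k h1 c, ih (k+1) (by omega) c, Finset.mul_sum,
        Finset.sum_eq_sum_Ico_succ_bot (show k < N by omega)]
      simp only [sub_self, mul_zero, neg_zero, zero_mul, Real.exp_zero, mul_one]
      congr 1
      apply Finset.sum_congr rfl
      intro j _
      rw [show -β c * (t j - t k) = (-β c * (t (k+1) - t k)) + (-β c * (t j - t (k+1))) by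
        ring, Real.exp_add]
      ring
  rw [funext_iff]
  apply forall_congr'
  intro i
  have hiN : i.val < N := i.isLt
  set f : ℕ → ℝ := fun j => (if j = i.val then d
      else ∑ c : Fin p, α c * Real.exp (-β c * |t i.val - t j|)) * x j with hf
  have hsum : A.mulVec (fun j => x j.val) i = ∑ j ∈ Finset.range N, f j := by
    rw [← Fin.sum_univ_eq_sum_range f N]
    simp only [Matrix.mulVec, dotProduct]
    apply Finset.sum_congr rfl
    intro j _
    show A i j * x j.val = f j.val
    rw [hA i j, hf]
    simp only []
    congr 1
    by_cases h : i = j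
    · subst h; simp
    · rw [if_neg h, if_neg (fun hv => h (Fin.ext hv.symm))]
  have hsplit : ∑ j ∈ Finset.range N, f j
      = ∑ j ∈ Finset.range i.val, f j + f i.val + ∑ j ∈ Finset.Ico (i.val + 1) N, f j := by
    rw [Finset.range_eq_Ico,
      ← Finset.sum_Ico_consecutive f (Nat.zero_le i.val) (le_of_lt hiN),
      ← Finset.range_eq_Ico, Finset.sum_eq_sum_Ico_succ_bot hiN, ← add_assoc]
  have hleft : ∑ j ∈ Finset.range i.val, f j = ∑ c : Fin p, α c * l i.val c := by
    rw [show (∑ c : Fin p, α c * l i.val c)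
        = ∑ c : Fin p, ∑ j ∈ Finset.range i.val,
            α c * (x j * Real.exp (-β c * (t i.val - t j))) by
      apply Finset.sum_congr rfl; intro c _; rw [hlclosed i.val hiN c, Finset.mul_sum],
      Finset.sum_comm]
    apply Finset.sum_congr rfl
    intro j hj
    have hji : j < i.val := Finset.mem_range.mp hj
    have habs : |t i.val - t j| = t i.val - t j :=
      abs_of_pos (by linarith [ht j i.val hji hiN])
    rw [hf]
    simp only [if_neg (by omega : ¬ j = i.val), habs, Finset.sum_mul]
    apply Finset.sum_congr rfl
    intro c _
    ring
  have hmid : f i.val = d * x i.val := by rw [hf]; simp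
  have hright : ∑ j ∈ Finset.Ico (i.val + 1) N, f j
      = (if i.val + 1 < N then
          ∑ c : Fin p, Real.exp (-β c * (t (i.val + 1) - t i.val)) * r (i.val + 1) c
        else 0) := by
    by_cases hcase : i.val + 1 < N
    · rw [if_pos hcase]
      rw [show (∑ c : Fin p, Real.exp (-β c * (t (i.val + 1) - t i.val)) * r (i.val + 1) c)
          = ∑ c : Fin p, ∑ j ∈ Finset.Ico (i.val + 1) N,
              Real.exp (-β c * (t (i.val + 1) - t i.val))
                * (x j * α c * Real.exp (-β c * (t j - t (i.val + 1)))) by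
        apply Finset.sum_congr rfl; intro c _
        rw [hrclosed (N - i.val - 2) (i.val + 1) (by omega) c, Finset.mul_sum],
        Finset.sum_comm]
      apply Finset.sum_congr rfl
      intro j hj
      have hji : i.val < j := (Finset.mem_Ico.mp hj).1
      have hjN : j < N := (Finset.mem_Ico.mp hj).2
      have habs : |t i.val - t j| = t j - t i.val := by
        rw [abs_sub_comm]; exact abs_of_pos (by linarith [ht i.val j hji hjN])
      rw [hf]
      simp only [if_neg (by omega : ¬ j = i.val), habs, Finset.sum_mul]
      apply Finset.sum_congr rfl
      intro c _
      rw [show -β c * (t j - t i.val)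
          = (-β c * (t (i.val + 1) - t i.val)) + (-β c * (t j - t (i.val + 1))) by ring,
        Real.exp_add]
      ring
    · rw [if_neg hcase, Finset.Ico_eq_empty (by omega), Finset.sum_empty]
  rw [hsum, hsplit, hleft, hmid, hright]
end

section
/- The interleaved extended matrix A_ex′ is banded with bandwidth 2: A_ex′(i,j) = 0 whenever |i − j| > 2. Here A_ex′ is the (3N−2)×(3N−2) real matrix acting on the unknowns ordered as (x_1, r_2, l_1, x_2, r_3, l_2, …, x_{N−1}, r_N, l_{N−1}, x_N), i.e., x_k in column position 3k−2 for 1 ≤ k ≤ N, r_{k+1} in position 3k−1 and l_k in position 3k for 1 ≤ k ≤ N−1, and whose rows are ordered as E_1, L_1, R_2, E_2, L_2, R_3, …, E_{N−1}, L_{N−1}, R_N, E_N (E_i in row position 3i−2, L_k in row position 3k−1, R_{k+1} in row position 3k), where E_i = v(i)·l_{i−1} + a(i)·x_i + u(i)·r_{i+1} (with l_0 and r_{N+1} read as 0), L_k = u(k)·x_k + l_{k−1} − l_k (with l_0 = 0), and R_k = v(k)·x_k + r_{k+1} − r_k (with r_{N+1} = 0). -/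
/-- the interleaved extended matrix `A_ex'` is banded with bandwidth 2.
Positions are 0-based: the unknown `x_k` (1-based `k`) sits in column `3(k-1)`, the
unknown `r_{k+1}` (for `1 ≤ k ≤ N-1`) in column `3k-2`, and `l_k` in column `3k-1`;
row `3(i-1)` is `E_i`, row `3k-2` is `L_k`, and row `3k-1` is `R_{k+1}` — exactly
the 1-based positions `3k-2, 3k-1, 3k` of the statement shifted by one.  The rows are
`E_i = v(i)·l_{i-1} + a(i)·x_i + u(i)·r_{i+1}` (`l_0 = r_{N+1} = 0`),
`L_k = u(k)·x_k + l_{k-1} - l_k` and `R_{k+1} = v(k+1)·x_{k+1} + r_{k+2} - r_{k+1}`,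
specified through the action of `A_ex'` on every vector `y`;
`a m, u m, v m` denote the 1-based `a(m+1), u(m+1), v(m+1)`. -/
theorem stmt_12 (N : ℕ) (hN : 2 ≤ N) (a u v : ℕ → ℝ)
    (Aex : Matrix (Fin (3 * N - 2)) (Fin (3 * N - 2)) ℝ)
    (hEx : ∀ y : Fin (3 * N - 2) → ℝ,
      -- rows E_{m+1}
      (∀ m, ∀ hm : m < N, Aex.mulVec y ⟨3 * m, by omega⟩ =
        v m * (if h : 1 ≤ m then y ⟨3 * m - 1, by omega⟩ else 0)
        + a m * y ⟨3 * m, by omega⟩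
        + u m * (if h : m + 2 ≤ N then y ⟨3 * m + 1, by omega⟩ else 0))
      ∧
      -- rows L_k, 1 ≤ k ≤ N-1
      (∀ k, ∀ hk1 : 1 ≤ k, ∀ hk2 : k < N, Aex.mulVec y ⟨3 * k - 2, by omega⟩ =
        u (k - 1) * y ⟨3 * (k - 1), by omega⟩
        + (if h : 2 ≤ k then y ⟨3 * k - 4, by omega⟩ else 0)
        - y ⟨3 * k - 1, by omega⟩)
      ∧
      -- rows R_{k+1}, 1 ≤ k ≤ N-1
      (∀ k, ∀ hk1 : 1 ≤ k, ∀ hk2 : k < N, Aex.mulVec y ⟨3 * k - 1, by omega⟩ =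
        v k * y ⟨3 * k, by omega⟩
        + (if h : k + 2 ≤ N then y ⟨3 * k + 1, by omega⟩ else 0)
        - y ⟨3 * k - 2, by omega⟩)) :
    ∀ i j : Fin (3 * N - 2), 2 < |(i.val : ℤ) - (j.val : ℤ)| → Aex i j = 0 := by

  intro i j hij
  have hy := hEx (Pi.single j 1)
  have hmv : ∀ r : Fin (3 * N - 2), Aex.mulVec (Pi.single j 1) r = Aex r j := by
    intro r
    simp [Matrix.mulVec_single]
  have hfar : (j.val : ℤ) + 2 < i.val ∨ (i.val : ℤ) + 2 < j.val := by
    rcases abs_cases ((i.val : ℤ) - j.val) with ⟨h, _⟩ | ⟨h, _⟩ <;> omega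
  have hne : ∀ c : ℕ, ∀ hc : c < 3 * N - 2, (c : ℤ) ≤ (i.val : ℤ) + 2 →
      (i.val : ℤ) ≤ (c : ℤ) + 2 → (Pi.single j (1 : ℝ) : Fin (3 * N - 2) → ℝ) ⟨c, hc⟩ = 0 := by
    intro c hc h1 h2
    apply Pi.single_eq_of_ne
    intro h
    have h' := congrArg Fin.val h
    simp only [] at h'
    omega
  have hi : i.val < 3 * N - 2 := i.isLt
  have hmod : i.val % 3 = 0 ∨ i.val % 3 = 1 ∨ i.val % 3 = 2 := by omega
  rcases hmod with h0 | h1 | h2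
  · set m := i.val / 3 with hmdef
    have hm : m < N := by omega
    have hival : i.val = 3 * m := by omega
    have e := hy.1 m hm
    rw [hmv] at e
    have hi' : i = ⟨3 * m, by omega⟩ := Fin.ext hival
    rw [hi', e]
    split_ifs with hc1 hc2
    · rw [hne (3 * m - 1) (by omega) (by omega) (by omega),
        hne (3 * m) (by omega) (by omega) (by omega),
        hne (3 * m + 1) (by omega) (by omega) (by omega)]; ring
    · rw [hne (3 * m - 1) (by omega) (by omega) (by omega),
        hne (3 * m) (by omega) (by omega) (by omega)]; ring
    · rw [hne (3 * m) (by omega) (by omega) (by omega),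
        hne (3 * m + 1) (by omega) (by omega) (by omega)]; ring
    · rw [hne (3 * m) (by omega) (by omega) (by omega)]; ring
  · set k := (i.val + 2) / 3 with hkdef
    have hk1 : 1 ≤ k := by omega
    have hk2 : k < N := by omega
    have hival : i.val = 3 * k - 2 := by omega
    have e := (hy.2).1 k hk1 hk2
    rw [hmv] at e
    have hi' : i = ⟨3 * k - 2, by omega⟩ := Fin.ext hival
    rw [hi', e]
    split_ifs with hc1
    · rw [hne (3 * (k - 1)) (by omega) (by omega) (by omega),
        hne (3 * k - 4) (by omega) (by omega) (by omega),
        hne (3 * k - 1) (by omega) (by omega) (by omega)]; ring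
    · rw [hne (3 * (k - 1)) (by omega) (by omega) (by omega),
        hne (3 * k - 1) (by omega) (by omega) (by omega)]; ring
  · set k := (i.val + 1) / 3 with hkdef
    have hk1 : 1 ≤ k := by omega
    have hk2 : k < N := by omega
    have hival : i.val = 3 * k - 1 := by omega
    have e := (hy.2).2 k hk1 hk2
    rw [hmv] at e
    have hi' : i = ⟨3 * k - 1, by omega⟩ := Fin.ext hival
    rw [hi', e]
    split_ifs with hc1
    · rw [hne (3 * k) (by omega) (by omega) (by omega),
        hne (3 * k + 1) (by omega) (by omega) (by omega),
        hne (3 * k - 2) (by omega) (by omega) (by omega)]; ring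
    · rw [hne (3 * k) (by omega) (by omega) (by omega),
        hne (3 * k - 2) (by omega) (by omega) (by omega)]; ring
end
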